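/- Let \beta > 1 and 0 < \epsilon < \pi. Suppose f : \mathbb{R} \to \mathbb{C} is continuous with support contained in [-\pi+\epsilon, \pi-\epsilon]. Then the 2\pi-periodic extension of f|_{[-\pi,\pi]} has absolutely summable Fourier coefficients with \sup_n |n|^\beta |\hat f_n| < \infty if and only if the Fourier transform of f (as a function on \mathbb{R}) is in L^1(\mathbb{R}) with \sup_\xi |\xi|^\beta |\hat f(\xi)| < \infty. -/

import Mathlib

/-!
Since `f` vanishes near `±π`, its Fourier coefficients are samples of its Fourier transform,
`f̂ₙ = f̂(n) / 2π`; this gives the easy direction. Conversely, take a smooth cutoff `φ` equal to `1`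
on the support of `f` and supported in `(-π, π)`. Multiplying the absolutely convergent Fourier
series of `f` by `φ` gives `f = ∑ₙ f̂ₙ e^{in·} φ`, hence `f̂(ξ) = ∑ₙ f̂ₙ φ̂(ξ - n)`. The rapid decay
of `φ̂` together with Peetre's inequality `(1 + |ξ|)^β ≤ (1 + |n|)^β (1 + |ξ - n|)^β` transfers the
decay of the coefficients to `f̂`, and decay of order `β > 1` makes `f̂` integrable.
-/

open MeasureTheory Real Complex Set Function FourierTransform

noncomputable def fourierAng (f : ℝ → ℂ) (ξ : ℝ) : ℂ :=
  ∫ x, f x * cexp (-I * ξ * x)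

theorem fourierAng_eq_fourier (f : ℝ → ℂ) (ξ : ℝ) : fourierAng f ξ = 𝓕 f (ξ / (2 * π)) := by
  rw [fourierAng, Real.fourier_real_eq_integral_exp_smul]
  congr 1 with x
  rw [smul_eq_mul, mul_comm]
  congr 2
  push_cast
  field_simp

theorem continuous_fourierAng {f : ℝ → ℂ} (hf : Integrable f) : Continuous (fourierAng f) := by
  have h𝓕 : Continuous (𝓕 f) :=
    VectorFourier.fourierIntegral_continuous Real.continuous_fourierChar (by fun_prop) hf
  rw [funext (fourierAng_eq_fourier f)]
  exact h𝓕.comp (continuous_id.div_const _)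

theorem fourier_coe_apply_neg_pi_pi (n : ℤ) (x : ℝ) :
    fourier n (x : AddCircle (π - -π)) = cexp (I * n * x) := by
  rw [fourier_coe_apply]
  congr 1
  push_cast
  field_simp
  ring

theorem fourierCoeffOn_neg_pi_pi (f : ℝ → ℂ) (n : ℤ) :
    fourierCoeffOn (neg_lt_self pi_pos) f n =
      1 / (2 * (π : ℂ)) * ∫ x in (-π)..π, f x * cexp (-I * n * x) := by
  rw [fourierCoeffOn_eq_integral]
  simp_rw [fourier_coe_apply_neg_pi_pi, smul_eq_mul, mul_comm (cexp _), Complex.real_smul]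
  push_cast
  ring_nf

theorem fourierCoeffOn_neg_pi_pi_eq_fourierAng {f : ℝ → ℂ} (hf : support f ⊆ Ioc (-π) π)
    (n : ℤ) : fourierCoeffOn (neg_lt_self pi_pos) f n = fourierAng f n / (2 * π) := by
  rw [fourierCoeffOn_neg_pi_pi, fourierAng,
    ← intervalIntegral.integral_eq_integral_of_support_subset
      ((support_mul_subset_left _ _).trans hf)]
  push_cast
  ring

theorem hasSum_fourierCoeffOn_smul_fourier {a b : ℝ} (hab : a < b) {f : ℝ → ℂ}
    (hf : ContinuousOn f (Icc a b)) (hfab : f a = f b) (hsum : Summable (fourierCoeffOn hab f))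
    {x : ℝ} (hx : x ∈ Ico a b) :
    HasSum (fun n ↦ fourierCoeffOn hab f n • fourier n (x : AddCircle (b - a))) (f x) := by
  have : Fact (0 < b - a) := ⟨sub_pos.2 hab⟩
  have hb : a + (b - a) = b := add_sub_cancel a b
  let F : C(AddCircle (b - a), ℂ) :=
    ⟨AddCircle.liftIco (b - a) a f, AddCircle.liftIco_continuous (by rwa [hb]) (by rwa [hb])⟩
  have hcoeff : fourierCoeff F = fourierCoeffOn hab f := by
    ext n
    rw [show fourierCoeff F n = _ from fourierCoeff_liftIco_eq f n]
    congr 1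
  have hFx : F x = f x := AddCircle.liftIco_coe_apply (by rwa [hb])
  rw [← hFx, ← hcoeff]
  exact has_pointwise_sum_fourier_series_of_summable (hcoeff ▸ hsum) _

theorem hasSum_fourierCoeffOn_mul_cexp {f : ℝ → ℂ} (hf : ContinuousOn f (Icc (-π) π))
    (hfπ : f (-π) = f π) (hsum : Summable (fourierCoeffOn (neg_lt_self pi_pos) f))
    {x : ℝ} (hx : x ∈ Ico (-π) π) :
    HasSum (fun n : ℤ ↦ fourierCoeffOn (neg_lt_self pi_pos) f n * cexp (I * n * x)) (f x) := by
  simpa only [fourier_coe_apply_neg_pi_pi, smul_eq_mul] using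
    hasSum_fourierCoeffOn_smul_fourier _ hf hfπ hsum hx

theorem norm_cexp_neg_I_mul (ξ x : ℝ) : ‖cexp (-I * ξ * x)‖ = 1 := by
  rw [show -I * ξ * x = ((-(ξ * x) : ℝ) : ℂ) * I by push_cast; ring, norm_exp_ofReal_mul_I]

theorem MeasureTheory.Integrable.mul_cexp_neg_I_mul {φ : ℝ → ℂ} (hφ : Integrable φ) (ξ : ℝ) :
    Integrable fun x : ℝ ↦ φ x * cexp (-I * ξ * x) :=
  hφ.mul_bdd (by fun_prop) (ae_of_all _ fun x ↦ (norm_cexp_neg_I_mul ξ x).le)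

theorem hasSum_fourierAng_of_summable_fourierCoeffOn {f φ : ℝ → ℂ}
    (hf : ContinuousOn f (Icc (-π) π)) (hsum : Summable (fourierCoeffOn (neg_lt_self pi_pos) f))
    (hφ : Integrable φ) (hφf : ∀ x, φ x * f x = f x) (hφsupp : support φ ⊆ Ioo (-π) π) (ξ : ℝ) :
    HasSum (fun n : ℤ ↦ fourierCoeffOn (neg_lt_self pi_pos) f n * fourierAng φ (ξ - n))
      (fourierAng f ξ) := by
  set c := fourierCoeffOn (neg_lt_self pi_pos) f
  have hf0 : ∀ x, φ x = 0 → f x = 0 := fun x hx ↦ by rw [← hφf x, hx, zero_mul]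
  have hfπ : f (-π) = f π := by
    rw [hf0 _ (notMem_support.1 fun h ↦ (hφsupp h).1.false),
      hf0 _ (notMem_support.1 fun h ↦ (hφsupp h).2.false)]
  let u : ℤ → ℝ → ℂ := fun n x ↦ c n * (φ x * cexp (-I * (ξ - n : ℝ) * x))
  have hu_int : ∀ n, Integrable (u n) := fun n ↦ (hφ.mul_cexp_neg_I_mul _).const_mul _
  have hu_norm : ∀ n, ∫ x, ‖u n x‖ = ‖c n‖ * ∫ x, ‖φ x‖ := fun n ↦ by
    simp only [u, norm_mul, norm_cexp_neg_I_mul, mul_one, integral_const_mul]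
  have hu_sum : ∀ x, ∑' n, u n x = f x * cexp (-I * ξ * x) := by
    intro x
    by_cases hx : φ x = 0
    · simp [u, hx, hf0 x hx]
    have hseries := (hasSum_fourierCoeffOn_mul_cexp hf hfπ hsum
      (Ioo_subset_Ico_self (hφsupp hx))).mul_right (φ x * cexp (-I * ξ * x))
    rw [← mul_assoc, mul_comm (f x), hφf] at hseries
    refine (tsum_congr fun n ↦ ?_).trans hseries.tsum_eq
    dsimp only [u]
    rw [show -I * (ξ - n : ℝ) * x = I * n * x + -I * ξ * x by push_cast; ring, Complex.exp_add]
    ring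
  have key := hasSum_integral_of_summable_integral_norm hu_int
    (by simpa only [hu_norm] using hsum.norm.mul_right _)
  simp only [hu_sum] at key
  simpa only [u, integral_const_mul, fourierAng] using key

open scoped ContDiff Manifold in
theorem exists_contDiff_hasCompactSupport_eqOn_one {a b c d : ℝ} (hca : c < a) (hbd : b < d) :
    ∃ φ : ℝ → ℂ, ContDiff ℝ ∞ φ ∧ HasCompactSupport φ ∧ EqOn φ 1 (Icc a b) ∧
      support φ ⊆ Ioo c d := by
  obtain ⟨ψ, hψ, -, hsupp, hone⟩ := exists_contMDiff_support_eq_eq_one_iff 𝓘(ℝ, ℝ) (n := ⊤)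
    (isOpen_Ioo (a := (c + a) / 2) (b := (b + d) / 2)) (isClosed_Icc (a := a) (b := b))
    (Icc_subset_Ioo (by linarith) (by linarith))
  have hsupp' : support (fun x ↦ (ψ x : ℂ)) = Ioo ((c + a) / 2) ((b + d) / 2) := by
    simpa only [support, ne_eq, ofReal_eq_zero] using hsupp
  refine ⟨fun x ↦ ψ x, ofRealCLM.contDiff.comp (contMDiff_iff_contDiff.1 hψ), ?_,
    fun x hx ↦ by simp [(hone x).1 hx],
    hsupp'.trans_subset (Ioo_subset_Ioo (by linarith) (by linarith))⟩
  exact isCompact_Icc.of_isClosed_subset (isClosed_tsupport _)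
    (closure_minimal (hsupp'.trans_subset Ioo_subset_Icc_self) isClosed_Icc)

open scoped ContDiff in
theorem exists_one_add_abs_rpow_mul_norm_fourierAng_le {φ : ℝ → ℂ} (hφ : ContDiff ℝ ∞ φ)
    (hc : HasCompactSupport φ) (s : ℝ) :
    ∃ C, ∀ η : ℝ, (1 + |η|) ^ s * ‖fourierAng φ η‖ ≤ C := by
  set k := ⌈s⌉₊
  obtain ⟨C, hC⟩ : ∃ C, ∀ w : ℝ, (1 + |w|) ^ k * ‖𝓕 φ w‖ ≤ C := ⟨_, fun w ↦ by
    have := SchwartzMap.one_add_le_sup_seminorm_apply (𝕜 := ℝ) (m := (k, 0)) le_rfl le_rfl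
      (𝓕 (hc.toSchwartzMap hφ)) w
    rw [norm_iteratedFDeriv_zero, SchwartzMap.fourier_coe, Real.norm_eq_abs] at this
    exact this⟩
  refine ⟨(2 * π) ^ k * C, fun η ↦ ?_⟩
  have hscale : 1 + |η| ≤ 2 * π * (1 + |η / (2 * π)|) := by
    rw [mul_add, abs_div, abs_of_pos two_pi_pos, mul_div_cancel₀ _ two_pi_pos.ne']
    nlinarith [pi_gt_three]
  calc (1 + |η|) ^ s * ‖fourierAng φ η‖
      ≤ (1 + |η|) ^ k * ‖fourierAng φ η‖ := by
        gcongr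
        rw [← Real.rpow_natCast]
        exact Real.rpow_le_rpow_of_exponent_le (by linarith [abs_nonneg η]) (Nat.le_ceil s)
    _ ≤ (2 * π * (1 + |η / (2 * π)|)) ^ k * ‖fourierAng φ η‖ := by gcongr
    _ ≤ _ := by
      rw [mul_pow, mul_assoc, fourierAng_eq_fourier]
      gcongr
      exact hC _

theorem one_add_abs_add_rpow_le {β : ℝ} (hβ : 0 ≤ β) (x y : ℝ) :
    (1 + |x + y|) ^ β ≤ (1 + |x|) ^ β * (1 + |y|) ^ β := by
  rw [← Real.mul_rpow (by positivity) (by positivity)]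
  gcongr
  nlinarith [abs_add_le x y, abs_nonneg x, abs_nonneg y]

theorem summable_one_add_abs_int_rpow_neg {s : ℝ} (hs : 1 < s) :
    Summable fun m : ℤ ↦ (1 + |(m : ℝ)|) ^ (-s) := by
  refine Summable.of_norm_bounded_eventually (Real.summable_abs_int_rpow hs) ?_
  filter_upwards [(Set.finite_singleton (0 : ℤ)).compl_mem_cofinite] with m hm
  have hm : 0 < |(m : ℝ)| := abs_pos.2 (Int.cast_ne_zero.2 hm)
  rw [Real.norm_of_nonneg (by positivity)]
  exact Real.rpow_le_rpow_of_nonpos hm (by linarith) (by linarith)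

theorem summable_and_tsum_one_add_abs_sub_int_rpow_neg_le {s : ℝ} (hs : 1 < s) (ξ : ℝ) :
    Summable (fun n : ℤ ↦ (1 + |ξ - n|) ^ (-s)) ∧
      ∑' n : ℤ, (1 + |ξ - n|) ^ (-s) ≤ 2 ^ s * ∑' m : ℤ, (1 + |(m : ℝ)|) ^ (-s) := by
  have hs0 : 0 ≤ s := by linarith
  set w : ℤ → ℝ := fun m ↦ (1 + |(m : ℝ)|) ^ (-s)
  have hle : ∀ n : ℤ, (1 + |ξ - n|) ^ (-s) ≤ 2 ^ s * w (n - ⌊ξ⌋) := by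
    intro n
    have hfloor : (1 + |ξ - ⌊ξ⌋|) ^ s ≤ 2 ^ s := by
      gcongr
      rw [Int.self_sub_floor, abs_of_nonneg (Int.fract_nonneg ξ)]
      linarith [Int.fract_lt_one ξ]
    have hpeetre := one_add_abs_add_rpow_le hs0 (n - ξ) (ξ - ⌊ξ⌋)
    rw [abs_sub_comm (n : ℝ)] at hpeetre
    simp only [w, Int.cast_sub]
    rw [Real.rpow_neg (by positivity), Real.rpow_neg (by positivity), ← div_eq_mul_inv,
      le_div_iff₀ (by positivity), ← div_eq_inv_mul, div_le_iff₀ (by positivity)]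
    calc (1 + |(n : ℝ) - ⌊ξ⌋|) ^ s = (1 + |(n - ξ) + (ξ - ⌊ξ⌋)|) ^ s := by ring_nf
      _ ≤ (1 + |ξ - n|) ^ s * (1 + |ξ - ⌊ξ⌋|) ^ s := hpeetre
      _ ≤ (1 + |ξ - n|) ^ s * 2 ^ s := by gcongr
      _ = _ := mul_comm _ _
  have hw : Summable fun n : ℤ ↦ w (n - ⌊ξ⌋) :=
    (Equiv.subRight ⌊ξ⌋).summable_iff.2 (summable_one_add_abs_int_rpow_neg hs)
  have hsum : Summable fun n : ℤ ↦ (1 + |ξ - n|) ^ (-s) :=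
    .of_nonneg_of_le (fun _ ↦ by positivity) hle (hw.mul_left _)
  refine ⟨hsum, (hsum.tsum_le_tsum hle (hw.mul_left _)).trans_eq ?_⟩
  rw [tsum_mul_left]
  exact congrArg _ ((Equiv.subRight ⌊ξ⌋).tsum_eq w)

theorem exists_one_add_abs_rpow_mul_tsum_norm_mul_le {β A B : ℝ} (hβ : 0 ≤ β) {a : ℤ → ℂ}
    {Φ : ℝ → ℂ} (ha : ∀ n : ℤ, (1 + |(n : ℝ)|) ^ β * ‖a n‖ ≤ A)
    (hΦ : ∀ η, (1 + |η|) ^ (β + 2) * ‖Φ η‖ ≤ B) :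
    ∃ K, ∀ ξ : ℝ, Summable (fun n : ℤ ↦ ‖a n * Φ (ξ - n)‖) ∧
      (1 + |ξ|) ^ β * ∑' n : ℤ, ‖a n * Φ (ξ - n)‖ ≤ K := by
  have hA : 0 ≤ A := (by positivity : (0 : ℝ) ≤ _).trans (ha 0)
  have hΦ' : ∀ η, (1 + |η|) ^ β * ‖Φ η‖ ≤ B * (1 + |η|) ^ (-2 : ℝ) := fun η ↦ by
    have h1 : (0 : ℝ) < 1 + |η| := by positivity
    calc (1 + |η|) ^ β * ‖Φ η‖ = (1 + |η|) ^ (β + 2) * ‖Φ η‖ * (1 + |η|) ^ (-2 : ℝ) := by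
          rw [mul_right_comm, ← Real.rpow_add h1]; ring_nf
      _ ≤ B * (1 + |η|) ^ (-2 : ℝ) := by gcongr; exact hΦ η
  refine ⟨A * B * (2 ^ (2 : ℝ) * ∑' m : ℤ, (1 + |(m : ℝ)|) ^ (-2 : ℝ)), fun ξ ↦ ?_⟩
  obtain ⟨hsum, htsum⟩ := summable_and_tsum_one_add_abs_sub_int_rpow_neg_le one_lt_two ξ
  have hterm : ∀ n : ℤ, (1 + |ξ|) ^ β * ‖a n * Φ (ξ - n)‖ ≤ A * B * (1 + |ξ - n|) ^ (-2 : ℝ) := by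
    intro n
    calc (1 + |ξ|) ^ β * ‖a n * Φ (ξ - n)‖
        ≤ (1 + |(n : ℝ)|) ^ β * (1 + |ξ - n|) ^ β * (‖a n‖ * ‖Φ (ξ - n)‖) := by
          rw [norm_mul]
          gcongr
          simpa using one_add_abs_add_rpow_le hβ n (ξ - n)
      _ = ((1 + |(n : ℝ)|) ^ β * ‖a n‖) * ((1 + |ξ - n|) ^ β * ‖Φ (ξ - n)‖) := by ring
      _ ≤ A * (B * (1 + |ξ - n|) ^ (-2 : ℝ)) :=
          mul_le_mul (ha n) (hΦ' _) (by positivity) hA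
      _ = _ := by ring
  have hweighted : Summable fun n : ℤ ↦ (1 + |ξ|) ^ β * ‖a n * Φ (ξ - n)‖ :=
    .of_nonneg_of_le (fun _ ↦ by positivity) hterm (hsum.mul_left _)
  refine ⟨(summable_mul_left_iff (by positivity)).1 hweighted, ?_⟩
  calc (1 + |ξ|) ^ β * ∑' n : ℤ, ‖a n * Φ (ξ - n)‖
      = ∑' n : ℤ, (1 + |ξ|) ^ β * ‖a n * Φ (ξ - n)‖ := tsum_mul_left.symm
    _ ≤ ∑' n : ℤ, A * B * (1 + |ξ - n|) ^ (-2 : ℝ) := hweighted.tsum_le_tsum hterm (hsum.mul_left _)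
    _ ≤ _ := by
      rw [tsum_mul_left]
      have hB : 0 ≤ B := (by positivity : (0 : ℝ) ≤ _).trans (hΦ 0)
      gcongr

theorem exists_one_add_abs_rpow_mul_norm_le {E : Type*} [SeminormedAddCommGroup E] {β M : ℝ}
    (hβ : 0 ≤ β) {a : ℤ → E} (h : ∀ n : ℤ, |(n : ℝ)| ^ β * ‖a n‖ ≤ M) :
    ∃ D, ∀ n : ℤ, (1 + |(n : ℝ)|) ^ β * ‖a n‖ ≤ D := by
  refine ⟨max (2 ^ β * M) ‖a 0‖, fun n ↦ ?_⟩
  rcases eq_or_ne n 0 with rfl | hn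
  · simp
  have hn : (1 : ℝ) ≤ |(n : ℝ)| := by exact_mod_cast Int.one_le_abs hn
  calc (1 + |(n : ℝ)|) ^ β * ‖a n‖ ≤ (2 * |(n : ℝ)|) ^ β * ‖a n‖ := by gcongr; linarith
    _ = 2 ^ β * (|(n : ℝ)| ^ β * ‖a n‖) := by
      rw [Real.mul_rpow zero_le_two (abs_nonneg _), mul_assoc]
    _ ≤ 2 ^ β * M := by gcongr; exact h n
    _ ≤ _ := le_max_left _ _

theorem summable_norm_of_abs_rpow_mul_norm_le {E : Type*} [SeminormedAddCommGroup E] {β M : ℝ}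
    (hβ : 1 < β) {a : ℤ → E} (h : ∀ n : ℤ, |(n : ℝ)| ^ β * ‖a n‖ ≤ M) :
    Summable fun n ↦ ‖a n‖ := by
  refine Summable.of_norm_bounded_eventually ((Real.summable_abs_int_rpow hβ).mul_left M) ?_
  filter_upwards [(Set.finite_singleton (0 : ℤ)).compl_mem_cofinite] with n hn
  have hn : 0 < |(n : ℝ)| ^ β := by
    have : 0 < |(n : ℝ)| := abs_pos.2 (Int.cast_ne_zero.2 hn)
    positivity
  rw [norm_norm, Real.rpow_neg (abs_nonneg _), ← div_eq_mul_inv, le_div_iff₀ hn, mul_comm]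
  exact h n

theorem integrable_of_one_add_abs_rpow_mul_norm_le {E : Type*} [NormedAddCommGroup E] {β K : ℝ}
    (hβ : 1 < β) {g : ℝ → E} (hg : AEStronglyMeasurable g)
    (h : ∀ ξ, (1 + |ξ|) ^ β * ‖g ξ‖ ≤ K) : Integrable g := by
  refine ((integrable_one_add_norm (by simpa using hβ)).const_mul K).mono' hg
    (ae_of_all _ fun ξ ↦ ?_)
  have h1 : 0 < (1 + ‖ξ‖) ^ β := by positivity
  rw [Real.rpow_neg (by positivity), ← div_eq_mul_inv, le_div_iff₀ h1, mul_comm, Real.norm_eq_abs]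
  exact h ξ

theorem exists_one_add_abs_rpow_mul_norm_fourierAng_le_of_fourierCoeffOn {β ε D : ℝ}
    (hβ : 0 ≤ β) (hε : 0 < ε) {f : ℝ → ℂ} (hf : ContinuousOn f (Icc (-π) π))
    (hsupp : support f ⊆ Icc (-π + ε) (π - ε))
    (hsum : Summable (fourierCoeffOn (neg_lt_self pi_pos) f))
    (hdecay : ∀ n : ℤ, (1 + |(n : ℝ)|) ^ β * ‖fourierCoeffOn (neg_lt_self pi_pos) f n‖ ≤ D) :
    ∃ K, ∀ ξ : ℝ, (1 + |ξ|) ^ β * ‖fourierAng f ξ‖ ≤ K := by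
  obtain ⟨φ, hφ, hφc, hφ1, hφsupp⟩ :=
    exists_contDiff_hasCompactSupport_eqOn_one (lt_add_of_pos_right (-π) hε) (sub_lt_self π hε)
  have hφf : ∀ x, φ x * f x = f x := fun x ↦ by
    by_cases hx : f x = 0
    · rw [hx, mul_zero]
    · rw [hφ1 (hsupp hx), Pi.one_apply, one_mul]
  obtain ⟨B, hB⟩ := exists_one_add_abs_rpow_mul_norm_fourierAng_le hφ hφc (β + 2)
  obtain ⟨K, hK⟩ := exists_one_add_abs_rpow_mul_tsum_norm_mul_le hβ hdecay hB
  refine ⟨K, fun ξ ↦ ?_⟩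
  obtain ⟨hs, hKξ⟩ := hK ξ
  have hF := hasSum_fourierAng_of_summable_fourierCoeffOn hf hsum
    (hφ.continuous.integrable_of_hasCompactSupport hφc) hφf hφsupp ξ
  calc (1 + |ξ|) ^ β * ‖fourierAng f ξ‖
      ≤ (1 + |ξ|) ^ β * ∑' n : ℤ,
          ‖fourierCoeffOn (neg_lt_self pi_pos) f n * fourierAng φ (ξ - n)‖ := by
        rw [← hF.tsum_eq]
        gcongr
        exact norm_tsum_le_tsum_norm hs
    _ ≤ K := hKξ

theorem stmt_13_general (β ε : ℝ) (hβ : 1 < β) (hε : 0 < ε)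
    (f : ℝ → ℂ) (hf : Continuous f)
    (hsupp : ∀ x : ℝ, x ∉ Set.Icc (-π + ε) (π - ε) → f x = 0) :
    ((Summable fun n : ℤ =>
        ‖(1 / (2 * (π : ℂ))) *
          ∫ x in (-π)..π, f x * Complex.exp (-Complex.I * (n : ℂ) * (x : ℂ))‖) ∧
      ∃ M : ℝ, ∀ n : ℤ,
        |(n : ℝ)| ^ β *
          ‖(1 / (2 * (π : ℂ))) *
            ∫ x in (-π)..π, f x * Complex.exp (-Complex.I * (n : ℂ) * (x : ℂ))‖ ≤ M)
    ↔
    ((Integrable fun ξ : ℝ =>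
        ∫ x : ℝ, f x * Complex.exp (-Complex.I * (ξ : ℂ) * (x : ℂ))) ∧
      ∃ M : ℝ, ∀ ξ : ℝ,
        |ξ| ^ β *
          ‖∫ x : ℝ, f x * Complex.exp (-Complex.I * (ξ : ℂ) * (x : ℂ))‖ ≤ M) := by
  have hsupp' : support f ⊆ Icc (-π + ε) (π - ε) := fun x hx ↦ by_contra (hx ∘ hsupp x)
  have hfc : HasCompactSupport f := .intro isCompact_Icc hsupp
  simp_rw [← fourierCoeffOn_neg_pi_pi]
  change _ ↔ Integrable (fourierAng f) ∧ ∃ M : ℝ, ∀ ξ : ℝ, |ξ| ^ β * ‖fourierAng f ξ‖ ≤ M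
  constructor
  · rintro ⟨hsum, M, hM⟩
    obtain ⟨D, hD⟩ := exists_one_add_abs_rpow_mul_norm_le (by linarith) hM
    obtain ⟨K, hK⟩ := exists_one_add_abs_rpow_mul_norm_fourierAng_le_of_fourierCoeffOn
      (by linarith) hε hf.continuousOn hsupp' hsum.of_norm hD
    have hF := continuous_fourierAng (hf.integrable_of_hasCompactSupport hfc)
    exact ⟨integrable_of_one_add_abs_rpow_mul_norm_le hβ hF.aestronglyMeasurable hK, K,
      fun ξ ↦ le_trans (by gcongr; linarith) (hK ξ)⟩
  · rintro ⟨-, M, hM⟩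
    have hM' (n : ℤ) :
        |(n : ℝ)| ^ β * ‖fourierCoeffOn (neg_lt_self pi_pos) f n‖ ≤ M / (2 * π) := by
      rw [fourierCoeffOn_neg_pi_pi_eq_fourierAng
          (hsupp'.trans (Icc_subset_Ioc (by linarith) (by linarith))),
        norm_div, norm_mul, Complex.norm_two, norm_real, Real.norm_of_nonneg pi_pos.le,
        mul_div_assoc']
      exact div_le_div_of_nonneg_right (hM n) two_pi_pos.le
    exact ⟨summable_norm_of_abs_rpow_mul_norm_le hβ hM', _, hM'⟩

/-- For `f` continuous, supported in `[-π+ε, π-ε]` and `β > 1`: the periodic Fourier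
coefficients of `f` are absolutely summable with `O(|n|^{-β})` decay iff the Fourier
transform of `f` on the line is in `L¹` with `O(|ξ|^{-β})` decay. -/
theorem stmt_13 (β ε : ℝ) (hβ : 1 < β) (hε : 0 < ε) (hεπ : ε < π)
    (f : ℝ → ℂ) (hf : Continuous f)
    (hsupp : ∀ x : ℝ, x ∉ Set.Icc (-π + ε) (π - ε) → f x = 0) :
    ((Summable fun n : ℤ =>
        ‖(1 / (2 * (π : ℂ))) *
          ∫ x in (-π)..π, f x * Complex.exp (-Complex.I * (n : ℂ) * (x : ℂ))‖) ∧
      ∃ M : ℝ, ∀ n : ℤ,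
        |(n : ℝ)| ^ β *
          ‖(1 / (2 * (π : ℂ))) *
            ∫ x in (-π)..π, f x * Complex.exp (-Complex.I * (n : ℂ) * (x : ℂ))‖ ≤ M)
    ↔
    ((Integrable fun ξ : ℝ =>
        ∫ x : ℝ, f x * Complex.exp (-Complex.I * (ξ : ℂ) * (x : ℂ))) ∧
      ∃ M : ℝ, ∀ ξ : ℝ,
        |ξ| ^ β *
          ‖∫ x : ℝ, f x * Complex.exp (-Complex.I * (ξ : ℂ) * (x : ℂ))‖ ≤ M) :=
  stmt_13_general β ε hβ hε f hf hsupp
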